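/- arXiv:0704.3405 — 2 statements merged into one kernel-verified Lean document; each statement's English description precedes it below -/
import Mathlib

section
/- Let (s_k, γ_k), k = 1, 2, …, be i.i.d. pairs of positive real random variables with E[s_1/(1+γ_1^{-1})] < ∞ and E[γ_1^{-1} s_1^2] < ∞, and let σ_θ^2 > 0 and P_tot > 0 be constants. Define for each K the equal-power BLUE distortion Var_K = σ_θ^2 · ( Σ_{k=1}^K P_tot s_k / (γ_1^{-1} P_tot s_k + K(1+γ_k^{-1})) )^{-1} (with γ_k^{-1} in the k-th term). Then almost surely Var_K converges, as K → ∞, to D_∞ := σ_θ^2 / ( P_tot · E[s_1/(1+γ_1^{-1})] ). -/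
/-!
Each summand `P s / (γ⁻¹ P s + K (1 + γ⁻¹))` lies between `P s / (K (1 + γ⁻¹)) - P² γ⁻¹ s² / K²`
and `P s / (K (1 + γ⁻¹))`. Summed over `k < K`, the upper bound is `P` times the Cesàro mean of the
i.i.d. variables `s_k / (1 + γ_k⁻¹)`, and the correction is `P² / K` times the Cesàro mean of
`γ_k⁻¹ s_k²`. By the strong law of large numbers both bounds, hence the sum, converge almost surely
to `P · E[s_1 / (1 + γ_1⁻¹)] > 0`, and `Var_K → D_∞` by continuity of inversion.
-/

open MeasureTheory ProbabilityTheory Finset Filter Topology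

lemma div_sub_mul_div_sq_le_div_add {a b c K : ℝ} (ha : 0 ≤ a) (hb : 1 ≤ b) (hc : 0 ≤ c)
    (hK : 0 < K) : a / (K * b) - a * c / K ^ 2 ≤ a / (c + K * b) := by
  have hKb : K ≤ K * b := le_mul_of_one_le_right hK.le hb
  have hgap : a / (K * b) - a / (c + K * b) = a * c / (K * b * (c + K * b)) := by
    field_simp
    ring
  have hden : K ^ 2 ≤ K * b * (c + K * b) := by nlinarith
  have : a * c / (K * b * (c + K * b)) ≤ a * c / K ^ 2 :=
    div_le_div_of_nonneg_left (by positivity) (by positivity) hden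
  linarith

theorem tendsto_sum_div_add_nat_mul {a b c : ℕ → ℝ} {ℓ ℓ' : ℝ} (ha : ∀ k, 0 ≤ a k)
    (hb : ∀ k, 1 ≤ b k) (hc : ∀ k, 0 ≤ c k)
    (hab : Tendsto (fun K : ℕ => (∑ k ∈ range K, a k / b k) / K) atTop (𝓝 ℓ))
    (hac : Tendsto (fun K : ℕ => (∑ k ∈ range K, a k * c k) / K) atTop (𝓝 ℓ')) :
    Tendsto (fun K : ℕ => ∑ k ∈ range K, a k / (c k + K * b k)) atTop (𝓝 ℓ) := by
  have hsum_div : ∀ K : ℕ, (∑ k ∈ range K, a k / b k) / K = ∑ k ∈ range K, a k / (K * b k) := by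
    intro K
    simp only [sum_div, div_div, mul_comm]
  have herr : Tendsto (fun K : ℕ => (∑ k ∈ range K, a k / b k) / K
      - 1 / (K : ℝ) * ((∑ k ∈ range K, a k * c k) / K)) atTop (𝓝 ℓ) := by
    simpa using hab.sub (tendsto_one_div_atTop_nhds_zero_nat.mul hac)
  refine tendsto_of_tendsto_of_tendsto_of_le_of_le' herr hab ?_ ?_
  · filter_upwards [eventually_gt_atTop 0] with K hK
    have hcorr : 1 / (K : ℝ) * ((∑ k ∈ range K, a k * c k) / K)
        = ∑ k ∈ range K, a k * c k / K ^ 2 := by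
      rw [← sum_div]; field_simp
    rw [hsum_div, hcorr, ← sum_sub_distrib]
    exact sum_le_sum fun k _ =>
      div_sub_mul_div_sq_le_div_add (ha k) (hb k) (hc k) (Nat.cast_pos.mpr hK)
  · filter_upwards [eventually_gt_atTop 0] with K hK
    have hK' : (0 : ℝ) < K := Nat.cast_pos.mpr hK
    rw [hsum_div]
    refine sum_le_sum fun k _ => div_le_div_of_nonneg_left (ha k) (by nlinarith [hb k]) ?_
    linarith [hc k]

theorem integral_pos_of_forall_pos {α : Type*} [MeasurableSpace α] {μ : Measure α} [NeZero μ]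
    {f : α → ℝ} (hf : ∀ x, 0 < f x) (hfi : Integrable f μ) : 0 < ∫ x, f x ∂μ := by
  have hsupp : Function.support f = Set.univ := Set.eq_univ_of_forall fun x => (hf x).ne'
  rw [integral_pos_iff_support_of_nonneg (fun x => (hf x).le) hfi, hsupp]
  simp [NeZero.ne μ]

theorem strong_law_ae_comp {Ω E : Type*} [MeasurableSpace Ω] [MeasurableSpace E] {μ : Measure Ω}
    {X : ℕ → Ω → E} (hindep : iIndepFun X μ) (hident : ∀ k, IdentDistrib (X k) (X 0) μ μ)
    {f : E → ℝ} (hf : Measurable f) (hint : Integrable (fun ω => f (X 0 ω)) μ) :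
    ∀ᵐ ω ∂μ, Tendsto (fun K : ℕ => (∑ k ∈ range K, f (X k ω)) / K) atTop
      (𝓝 (∫ ω, f (X 0 ω) ∂μ)) :=
  strong_law_ae_real (fun k ω => f (X k ω)) hint
    (fun _ _ hij => (hindep.indepFun hij).comp hf hf) fun k => (hident k).comp hf

theorem stmt_0_general {Ω : Type*} [MeasurableSpace Ω] (μ : Measure Ω)
    [IsProbabilityMeasure μ] (X : ℕ → Ω → ℝ × ℝ)
    (hindep : iIndepFun X μ)
    (hident : ∀ k, IdentDistrib (X k) (X 0) μ μ)
    (hpos : ∀ k ω, 0 < (X k ω).1 ∧ 0 < (X k ω).2)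
    (hint1 : Integrable (fun ω => (X 0 ω).1 / (1 + ((X 0 ω).2)⁻¹)) μ)
    (hint2 : Integrable (fun ω => ((X 0 ω).2)⁻¹ * (X 0 ω).1 ^ 2) μ)
    (σθsq Ptot : ℝ) (hP : 0 < Ptot) :
    ∀ᵐ ω ∂μ, Tendsto
      (fun K : ℕ => σθsq *
        (∑ k ∈ range K, Ptot * (X k ω).1 /
          (((X k ω).2)⁻¹ * Ptot * (X k ω).1 + K * (1 + ((X k ω).2)⁻¹)))⁻¹)
      atTop
      (nhds (σθsq / (Ptot * ∫ ω, (X 0 ω).1 / (1 + ((X 0 ω).2)⁻¹) ∂μ))) := by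
  have hmean := strong_law_ae_comp hindep hident (f := fun p => p.1 / (1 + p.2⁻¹))
    (by fun_prop) hint1
  have hsq := strong_law_ae_comp hindep hident (f := fun p => p.2⁻¹ * p.1 ^ 2)
    (by fun_prop) hint2
  have hm : 0 < ∫ ω, (X 0 ω).1 / (1 + ((X 0 ω).2)⁻¹) ∂μ :=
    integral_pos_of_forall_pos (fun ω => by obtain ⟨h1, h2⟩ := hpos 0 ω; positivity) hint1
  filter_upwards [hmean, hsq] with ω hmeanω hsqω
  have hsum := tendsto_sum_div_add_nat_mul (a := fun k => Ptot * (X k ω).1)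
    (b := fun k => 1 + ((X k ω).2)⁻¹) (c := fun k => ((X k ω).2)⁻¹ * Ptot * (X k ω).1)
    (fun k => by obtain ⟨h1, h2⟩ := hpos k ω; positivity)
    (fun k => by obtain ⟨h1, h2⟩ := hpos k ω; simp only [le_add_iff_nonneg_right]; positivity)
    (fun k => by obtain ⟨h1, h2⟩ := hpos k ω; positivity)
    (by simpa only [mul_div_assoc, ← mul_sum] using hmeanω.const_mul Ptot)
    ((hsqω.const_mul (Ptot ^ 2)).congr fun K => by
      rw [← mul_div_assoc, mul_sum]
      exact congrArg (· / (K : ℝ)) (sum_congr rfl fun k _ => by ring))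
  simpa only [div_eq_mul_inv] using (hsum.inv₀ (by positivity)).const_mul σθsq

/-- Almost-sure convergence of the equal-power BLUE distortion: for i.i.d. pairs
`(s_k, γ_k)` of positive random variables with `E[s_1/(1+γ_1⁻¹)] < ∞` and
`E[γ_1⁻¹ s_1²] < ∞`, the distortion
`Var_K = σ_θ² (∑_{k=1}^K P_tot s_k/(γ_k⁻¹ P_tot s_k + K(1+γ_k⁻¹)))⁻¹`
converges almost surely to `D_∞ = σ_θ²/(P_tot · E[s_1/(1+γ_1⁻¹)])`. -/
theorem stmt_0 {Ω : Type*} [MeasurableSpace Ω] (μ : Measure Ω)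
    [IsProbabilityMeasure μ] (X : ℕ → Ω → ℝ × ℝ)
    (hmeas : ∀ k, Measurable (X k))
    (hindep : iIndepFun X μ)
    (hident : ∀ k, IdentDistrib (X k) (X 0) μ μ)
    (hpos : ∀ k ω, 0 < (X k ω).1 ∧ 0 < (X k ω).2)
    (hint1 : Integrable (fun ω => (X 0 ω).1 / (1 + ((X 0 ω).2)⁻¹)) μ)
    (hint2 : Integrable (fun ω => ((X 0 ω).2)⁻¹ * (X 0 ω).1 ^ 2) μ)
    (σθsq Ptot : ℝ) (hσ : 0 < σθsq) (hP : 0 < Ptot) :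
    ∀ᵐ ω ∂μ, Tendsto
      (fun K : ℕ => σθsq *
        (∑ k ∈ range K, Ptot * (X k ω).1 /
          (((X k ω).2)⁻¹ * Ptot * (X k ω).1 + K * (1 + ((X k ω).2)⁻¹)))⁻¹)
      atTop
      (nhds (σθsq / (Ptot * ∫ ω, (X 0 ω).1 / (1 + ((X 0 ω).2)⁻¹) ∂μ))) :=
  stmt_0_general μ X hindep hident hpos hint1 hint2 σθsq Ptot hP
end

section
/- Let K ≥ 1, let γ_1, …, γ_K > 0, let η_1 ≥ η_2 ≥ … ≥ η_K > 0, and let P_tot > 0. For 1 ≤ k ≤ K define A(k) = Σ_{m=1}^k γ_m/√η_m, B(k) = Σ_{m=1}^k γ_m/η_m + P_tot, and f(k) = √η_k · B(k)/A(k) − 1. Then f(1) > 0, and there exists a unique index K_1 ∈ {1, …, K} such that f(K_1) > 0 and either K_1 = K or f(K_1 + 1) ≤ 0. -/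
open Finset

/-- `A(k) = ∑_{m=1}^k γ_m/√η_m`. -/
noncomputable def sensA (γ η : ℕ → ℝ) (k : ℕ) : ℝ :=
  ∑ m ∈ Finset.Icc 1 k, γ m / Real.sqrt (η m)

/-- `B(k) = ∑_{m=1}^k γ_m/η_m + P_tot`. -/
noncomputable def sensB (γ η : ℕ → ℝ) (Ptot : ℝ) (k : ℕ) : ℝ :=
  (∑ m ∈ Finset.Icc 1 k, γ m / η m) + Ptot

/-- `f(k) = √η_k · B(k)/A(k) − 1`. -/
noncomputable def sensf (γ η : ℕ → ℝ) (Ptot : ℝ) (k : ℕ) : ℝ :=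
  Real.sqrt (η k) * sensB γ η Ptot k / sensA γ η k - 1

lemma sqrt_mul_div {x : ℝ} (hx : 0 < x) (c : ℝ) :
    Real.sqrt x * (c / x) = c / Real.sqrt x := by
  have hs : (0:ℝ) < Real.sqrt x := Real.sqrt_pos.2 hx
  rw [eq_div_iff hs.ne']
  rw [mul_right_comm, Real.mul_self_sqrt hx.le, mul_div_cancel₀ _ hx.ne']

lemma sensA_pos {K : ℕ} {γ η : ℕ → ℝ} (hγ : ∀ k, 1 ≤ k → k ≤ K → 0 < γ k)
    (hη : ∀ k, 1 ≤ k → k ≤ K → 0 < η k) {k : ℕ} (h1 : 1 ≤ k) (h2 : k ≤ K) :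
    0 < sensA γ η k := by
  apply Finset.sum_pos
  · intro m hm
    rw [Finset.mem_Icc] at hm
    exact div_pos (hγ m hm.1 (hm.2.trans h2)) (Real.sqrt_pos.2 (hη m hm.1 (hm.2.trans h2)))
  · exact ⟨1, Finset.mem_Icc.2 ⟨le_refl 1, h1⟩⟩

lemma sensB_pos {K : ℕ} {γ η : ℕ → ℝ} (hγ : ∀ k, 1 ≤ k → k ≤ K → 0 < γ k)
    (hη : ∀ k, 1 ≤ k → k ≤ K → 0 < η k) {Ptot : ℝ} (hP : 0 < Ptot)
    {k : ℕ} (h2 : k ≤ K) : 0 < sensB γ η Ptot k := by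
  have : (0:ℝ) ≤ ∑ m ∈ Finset.Icc 1 k, γ m / η m := by
    apply Finset.sum_nonneg
    intro m hm
    rw [Finset.mem_Icc] at hm
    exact (div_pos (hγ m hm.1 (hm.2.trans h2)) (hη m hm.1 (hm.2.trans h2))).le
  unfold sensB; linarith

lemma sensf_pos_iff {γ η : ℕ → ℝ} {Ptot : ℝ} {k : ℕ} (hA : 0 < sensA γ η k) :
    0 < sensf γ η Ptot k ↔ sensA γ η k < Real.sqrt (η k) * sensB γ η Ptot k := by
  unfold sensf
  rw [sub_pos, lt_div_iff₀ hA, one_mul]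

lemma sensf_nonpos_iff {γ η : ℕ → ℝ} {Ptot : ℝ} {k : ℕ} (hA : 0 < sensA γ η k) :
    sensf γ η Ptot k ≤ 0 ↔ Real.sqrt (η k) * sensB γ η Ptot k ≤ sensA γ η k := by
  unfold sensf
  rw [sub_nonpos, div_le_one hA]

lemma sensf_step {K : ℕ} {γ η : ℕ → ℝ} (hγ : ∀ k, 1 ≤ k → k ≤ K → 0 < γ k)
    (hη : ∀ k, 1 ≤ k → k ≤ K → 0 < η k)
    (hrank : ∀ j k, 1 ≤ j → j ≤ k → k ≤ K → η k ≤ η j)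
    {Ptot : ℝ} (hP : 0 < Ptot) {k : ℕ} (h1 : 1 ≤ k) (h2 : k + 1 ≤ K)
    (hf : sensf γ η Ptot k ≤ 0) : sensf γ η Ptot (k + 1) ≤ 0 := by
  have hkK : k ≤ K := le_trans (Nat.le_succ k) h2
  have hA := sensA_pos hγ hη h1 hkK
  have hB := sensB_pos hγ hη hP hkK
  have hη' : 0 < η (k+1) := hη _ (by omega) h2
  have hγ' : 0 < γ (k+1) := hγ _ (by omega) h2
  have hmono : η (k+1) ≤ η k := hrank k (k+1) h1 (Nat.le_succ k) h2
  have hsle : Real.sqrt (η (k+1)) ≤ Real.sqrt (η k) := Real.sqrt_le_sqrt hmono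
  have hkey : Real.sqrt (η k) * sensB γ η Ptot k ≤ sensA γ η k :=
    (sensf_nonpos_iff hA).1 hf
  have hA' : 0 < sensA γ η (k+1) := sensA_pos hγ hη (by omega) h2
  rw [sensf_nonpos_iff hA']
  have hAeq : sensA γ η (k+1) = sensA γ η k + γ (k+1) / Real.sqrt (η (k+1)) := by
    unfold sensA
    rw [Finset.sum_Icc_succ_top (by omega : 1 ≤ k + 1)]
  have hBeq : sensB γ η Ptot (k+1) = sensB γ η Ptot k + γ (k+1) / η (k+1) := by
    unfold sensB
    rw [Finset.sum_Icc_succ_top (by omega : 1 ≤ k + 1)]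
    ring
  rw [hAeq, hBeq, mul_add, sqrt_mul_div hη']
  have h1 : Real.sqrt (η (k+1)) * sensB γ η Ptot k ≤ Real.sqrt (η k) * sensB γ η Ptot k :=
    mul_le_mul_of_nonneg_right hsle hB.le
  linarith

lemma sensf_persist {K : ℕ} {γ η : ℕ → ℝ} (hγ : ∀ k, 1 ≤ k → k ≤ K → 0 < γ k)
    (hη : ∀ k, 1 ≤ k → k ≤ K → 0 < η k)
    (hrank : ∀ j k, 1 ≤ j → j ≤ k → k ≤ K → η k ≤ η j)
    {Ptot : ℝ} (hP : 0 < Ptot) {j : ℕ} (hj : 1 ≤ j)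
    (hf : sensf γ η Ptot j ≤ 0) :
    ∀ m, j ≤ m → m ≤ K → sensf γ η Ptot m ≤ 0 := by
  intro m hm
  induction m, hm using Nat.le_induction with
  | base => intro _; exact hf
  | succ n hn ih =>
    intro hnK
    exact sensf_step hγ hη hrank hP (le_trans hj hn) hnK (ih (by omega))

/-- Existence and uniqueness of the cutoff index `K₁` for the optimal power
allocation with a sum power constraint: `f(1) > 0` and there is a unique
`K₁ ∈ {1,…,K}` with `f(K₁) > 0` and (`K₁ = K` or `f(K₁+1) ≤ 0`). -/
theorem stmt_13 (K : ℕ) (hK : 1 ≤ K) (γ η : ℕ → ℝ)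
    (hγ : ∀ k, 1 ≤ k → k ≤ K → 0 < γ k)
    (hη : ∀ k, 1 ≤ k → k ≤ K → 0 < η k)
    (hrank : ∀ j k, 1 ≤ j → j ≤ k → k ≤ K → η k ≤ η j)
    (Ptot : ℝ) (hP : 0 < Ptot) :
    0 < sensf γ η Ptot 1 ∧
    ∃! K₁ : ℕ, (K₁ ∈ Finset.Icc 1 K ∧ 0 < sensf γ η Ptot K₁ ∧
      (K₁ = K ∨ sensf γ η Ptot (K₁ + 1) ≤ 0)) := by
  have hA1 : 0 < sensA γ η 1 := sensA_pos hγ hη le_rfl hK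
  have hη1 : 0 < η 1 := hη 1 le_rfl hK
  have hf1 : 0 < sensf γ η Ptot 1 := by
    rw [sensf_pos_iff hA1]
    have hAeq : sensA γ η 1 = γ 1 / Real.sqrt (η 1) := by
      unfold sensA; simp
    have hBeq : sensB γ η Ptot 1 = γ 1 / η 1 + Ptot := by
      unfold sensB; simp
    rw [hAeq, hBeq, mul_add, sqrt_mul_div hη1]
    have : 0 < Real.sqrt (η 1) * Ptot :=
      mul_pos (Real.sqrt_pos.2 hη1) hP
    linarith
  refine ⟨hf1, ?_⟩
  -- uniqueness claim for arbitrary pairs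
  have huniq : ∀ a b : ℕ, (a ∈ Finset.Icc 1 K ∧ 0 < sensf γ η Ptot a ∧
      (a = K ∨ sensf γ η Ptot (a + 1) ≤ 0)) →
      (b ∈ Finset.Icc 1 K ∧ 0 < sensf γ η Ptot b ∧
      (b = K ∨ sensf γ η Ptot (b + 1) ≤ 0)) → a ≤ b → a = b := by
    intro a b ⟨ha, hfa, hca⟩ ⟨hb, hfb, hcb⟩ hab
    rw [Finset.mem_Icc] at ha hb
    by_contra hne
    have hlt : a < b := lt_of_le_of_ne hab hne
    have haK : a ≠ K := by omega
    have hfa1 : sensf γ η Ptot (a+1) ≤ 0 := hca.resolve_left haK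
    have := sensf_persist hγ hη hrank hP (by omega : 1 ≤ a + 1) hfa1 b (by omega) hb.2
    linarith
  by_cases hall : ∀ k ∈ Finset.Icc 1 K, 0 < sensf γ η Ptot k
  · refine ⟨K, ⟨Finset.mem_Icc.2 ⟨hK, le_rfl⟩, hall K (Finset.mem_Icc.2 ⟨hK, le_rfl⟩),
      Or.inl rfl⟩, ?_⟩
    intro y hy
    rcases le_or_gt y K with h | h
    · exact huniq y K hy ⟨Finset.mem_Icc.2 ⟨hK, le_rfl⟩,
        hall K (Finset.mem_Icc.2 ⟨hK, le_rfl⟩), Or.inl rfl⟩ h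
    · exact absurd (Finset.mem_Icc.1 hy.1).2 (by omega)
  · push_neg at hall
    obtain ⟨j0, hj0mem, hj0⟩ := hall
    set S := (Finset.Icc 1 K).filter (fun k => ¬ 0 < sensf γ η Ptot k) with hS
    have hSne : S.Nonempty := ⟨j0, Finset.mem_filter.2 ⟨hj0mem, not_lt.2 hj0⟩⟩
    set j := S.min' hSne with hj
    have hjS : j ∈ S := Finset.min'_mem S hSne
    obtain ⟨hjmem, hjneg⟩ := Finset.mem_filter.1 hjS
    rw [Finset.mem_Icc] at hjmem
    have hj2 : 2 ≤ j := by
      rcases Nat.lt_or_ge j 2 with h | h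
      · interval_cases j
        · omega
        · exact absurd hf1 hjneg
      · exact h
    have hK1mem : j - 1 ∈ Finset.Icc 1 K := Finset.mem_Icc.2 ⟨by omega, by omega⟩
    have hK1pos : 0 < sensf γ η Ptot (j - 1) := by
      by_contra h
      have : j - 1 ∈ S := Finset.mem_filter.2 ⟨hK1mem, h⟩
      have := Finset.min'_le S _ this
      omega
    have hK1next : sensf γ η Ptot (j - 1 + 1) ≤ 0 := by
      have : j - 1 + 1 = j := by omega
      rw [this]
      push_neg at hjneg
      exact hjneg
    refine ⟨j - 1, ⟨hK1mem, hK1pos, Or.inr hK1next⟩, ?_⟩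
    intro y hy
    rcases le_or_gt y (j-1) with h | h
    · exact (huniq y (j-1) hy ⟨hK1mem, hK1pos, Or.inr hK1next⟩ h)
    · exact (huniq (j-1) y ⟨hK1mem, hK1pos, Or.inr hK1next⟩ hy (by omega)).symm
end
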